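/- arXiv:2404.08319 — 4 statements merged into one kernel-verified Lean document; each statement's English description precedes it below -/
import Mathlib

section
/- Let h:[0,b]→[0,∞) be concave with positive integral and let α>0. Then the α-powered centroid g_α(h) = (∫_0^b t h(t)^α dt)/(∫_0^b h(t)^α dt) satisfies (b - g_α(h))/b ≥ 1/(α+2). -/
/-!
Concavity and `h ≥ 0` make `t ↦ h t / t` antitone on `(0, b]`, hence so is `t ↦ (h t / t) ^ α`.
Put `t₀ = (α + 1) b / (α + 2)`, the centroid of the weight `t ^ α` on `[0, b]`, and
`c = (h t₀ / t₀) ^ α`. Then `(t₀ - t) (h t ^ α - c t ^ α) ≥ 0` for every `t`, and integrating gives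
`∫ t h ^ α ≤ t₀ ∫ h ^ α`, i.e. the `α`-centroid of `h` is at most `t₀`.
-/

open MeasureTheory Set intervalIntegral

namespace ConcaveOn

variable {s : Set ℝ} {f : ℝ → ℝ}

theorem mul_apply_le_mul_apply (hf : ConcaveOn ℝ s f) (h0 : (0 : ℝ) ∈ s) (hf0 : 0 ≤ f 0)
    {x t : ℝ} (ht : t ∈ s) (hx : 0 ≤ x) (hxt : x ≤ t) : x * f t ≤ t * f x := by
  rcases (hx.trans hxt).eq_or_lt with rfl | htpos
  · simp [le_antisymm hxt hx]
  have hw : 0 ≤ 1 - x / t := sub_nonneg.2 ((div_le_one htpos).2 hxt)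
  have hconc := hf.2 ht h0 (div_nonneg hx htpos.le) hw (by ring)
  simp only [smul_eq_mul, mul_zero, add_zero, div_mul_cancel₀ _ htpos.ne'] at hconc
  have : x / t * f t ≤ f x := by nlinarith [mul_nonneg hw hf0]
  rwa [div_mul_eq_mul_div, div_le_iff₀ htpos, mul_comm (f x)] at this

theorem rpow_mul_rpow_le (hf : ConcaveOn ℝ s f) (h0 : (0 : ℝ) ∈ s) (hf0 : 0 ≤ f 0)
    (hnn : ∀ t ∈ s, 0 ≤ f t) {p x t : ℝ} (hp : 0 ≤ p) (hxs : x ∈ s) (ht : t ∈ s)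
    (hx : 0 ≤ x) (hxt : x ≤ t) : x ^ p * f t ^ p ≤ t ^ p * f x ^ p := by
  rw [← Real.mul_rpow hx (hnn t ht), ← Real.mul_rpow (hx.trans hxt) (hnn x hxs)]
  exact Real.rpow_le_rpow (mul_nonneg hx (hnn t ht)) (hf.mul_apply_le_mul_apply h0 hf0 ht hx hxt) hp

variable {a b : ℝ}

theorem le_two_mul_apply_midpoint (hf : ConcaveOn ℝ (Icc a b) f)
    (hnn : ∀ t ∈ Icc a b, 0 ≤ f t) {t : ℝ} (ht : t ∈ Icc a b) : f t ≤ 2 * f ((a + b) / 2) := by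
  have hrefl : a + b - t ∈ Icc a b := ⟨by linarith [ht.2], by linarith [ht.1]⟩
  have hmid := hf.2 ht hrefl (by norm_num : (0 : ℝ) ≤ 1 / 2) (by norm_num : (0 : ℝ) ≤ 1 / 2)
    (by norm_num)
  simp only [smul_eq_mul] at hmid
  rw [show 1 / 2 * t + 1 / 2 * (a + b - t) = (a + b) / 2 by ring] at hmid
  linarith [hnn _ hrefl]

theorem intervalIntegrable_rpow (hf : ConcaveOn ℝ (Icc a b) f) (hab : a ≤ b)
    (hnn : ∀ t ∈ Icc a b, 0 ≤ f t) {p : ℝ} (hp : 0 ≤ p) :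
    IntervalIntegrable (fun t => f t ^ p) volume a b := by
  rw [intervalIntegrable_iff_integrableOn_Ioo_of_le hab]
  have hcont : ContinuousOn f (Ioo a b) := by
    simpa only [interior_Icc] using hf.continuousOn_interior
  refine Integrable.mono' (integrable_const ((2 * f ((a + b) / 2)) ^ p))
    ((hcont.rpow_const fun _ _ => Or.inr hp).aestronglyMeasurable measurableSet_Ioo) ?_
  filter_upwards [ae_restrict_mem measurableSet_Ioo] with t ht
  have ht' : t ∈ Icc a b := Ioo_subset_Icc_self ht
  rw [Real.norm_of_nonneg (Real.rpow_nonneg (hnn t ht') p)]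
  exact Real.rpow_le_rpow (hnn t ht') (hf.le_two_mul_apply_midpoint hnn ht') hp

end ConcaveOn

theorem integral_sub_mul {g : ℝ → ℝ} {a b : ℝ} (hg : IntervalIntegrable g volume a b) (c : ℝ) :
    ∫ t in a..b, (c - t) * g t = c * (∫ t in a..b, g t) - ∫ t in a..b, t * g t := by
  have hmul : IntervalIntegrable (fun t => t * g t) volume a b := hg.continuousOn_mul continuousOn_id
  simp only [sub_mul]
  rw [integral_sub (hg.const_mul c) hmul, intervalIntegral.integral_const_mul]

theorem integral_mul_rpow {α b : ℝ} (hα : -1 < α) (hb : 0 ≤ b) :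
    ∫ t in (0 : ℝ)..b, t * t ^ α = (α + 1) / (α + 2) * b * ∫ t in (0 : ℝ)..b, t ^ α := by
  have hα1 : α + 1 ≠ 0 := by linarith
  have hα2 : α + 1 + 1 ≠ 0 := by linarith
  have hα2' : α + 2 ≠ 0 := by linarith
  have hcongr : EqOn (fun t : ℝ => t * t ^ α) (fun t => t ^ (α + 1)) (uIcc 0 b) := by
    intro t ht
    rw [uIcc_of_le hb] at ht
    simp only [Real.rpow_add_one' ht.1 hα1, mul_comm]
  rw [integral_congr hcongr, integral_rpow (Or.inl hα), integral_rpow (Or.inl (by linarith)),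
    Real.zero_rpow hα1, Real.zero_rpow hα2, Real.rpow_add_one' hb hα2]
  field_simp
  ring

theorem ConcaveOn.div_rpow_mul_sub_mul_rpow_le {b p t₀ t : ℝ} {f : ℝ → ℝ}
    (hf : ConcaveOn ℝ (Icc 0 b) f) (hnn : ∀ t ∈ Icc 0 b, 0 ≤ f t) (hp : 0 ≤ p)
    (ht₀ : t₀ ∈ Ioc 0 b) (ht : t ∈ Icc 0 b) :
    f t₀ ^ p / t₀ ^ p * ((t₀ - t) * t ^ p) ≤ (t₀ - t) * f t ^ p := by
  have h0 : (0 : ℝ) ∈ Icc 0 b := ⟨le_rfl, ht.1.trans ht.2⟩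
  have ht₀' : t₀ ∈ Icc 0 b := Ioc_subset_Icc_self ht₀
  rw [div_mul_eq_mul_div, div_le_iff₀ (Real.rpow_pos_of_pos ht₀.1 p)]
  rcases le_total t t₀ with hle | hle
  · have := hf.rpow_mul_rpow_le h0 (hnn 0 h0) hnn hp ht ht₀' ht.1 hle
    linear_combination (t₀ - t) * this
  · have := hf.rpow_mul_rpow_le h0 (hnn 0 h0) hnn hp ht₀' ht ht₀.1.le hle
    linear_combination (t - t₀) * this

theorem ConcaveOn.integral_mul_rpow_le {b p : ℝ} {f : ℝ → ℝ} (hf : ConcaveOn ℝ (Icc 0 b) f)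
    (hb : 0 < b) (hnn : ∀ t ∈ Icc 0 b, 0 ≤ f t) (hp : 0 ≤ p) :
    ∫ t in (0 : ℝ)..b, t * f t ^ p ≤ (p + 1) / (p + 2) * b * ∫ t in (0 : ℝ)..b, f t ^ p := by
  set t₀ := (p + 1) / (p + 2) * b
  have ht₀ : t₀ ∈ Ioc 0 b :=
    ⟨by positivity, mul_le_of_le_one_left hb.le ((div_le_one (by positivity)).2 (by linarith))⟩
  have hweight : IntervalIntegrable (fun t : ℝ => t ^ p) volume 0 b :=
    intervalIntegrable_rpow' (by linarith)
  have hweight_centroid : ∫ t in (0 : ℝ)..b, (t₀ - t) * t ^ p = 0 := by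
    rw [integral_sub_mul hweight, integral_mul_rpow (by linarith) hb.le, sub_self]
  have hfp := hf.intervalIntegrable_rpow hb.le hnn hp
  have hmono := integral_mono_on hb.le
    ((hweight.continuousOn_mul (g := fun t => t₀ - t) (by fun_prop)).const_mul _)
    (hfp.continuousOn_mul (g := fun t => t₀ - t) (by fun_prop))
    (fun t ht => hf.div_rpow_mul_sub_mul_rpow_le hnn hp ht₀ ht)
  rw [intervalIntegral.integral_const_mul, hweight_centroid, mul_zero, integral_sub_mul hfp]
    at hmono
  linarith

theorem stmt_6_general (b α : ℝ) (h : ℝ → ℝ) (hb : 0 < b) (hα : 0 < α)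
    (hconc : ConcaveOn ℝ (Set.Icc 0 b) h)
    (hnn : ∀ t ∈ Set.Icc (0 : ℝ) b, 0 ≤ h t) :
    (b - (∫ t in (0 : ℝ)..b, t * h t ^ α) / (∫ t in (0 : ℝ)..b, h t ^ α)) / b ≥
      1 / (α + 2) := by
  have hcentroid : (∫ t in (0 : ℝ)..b, t * h t ^ α) / (∫ t in (0 : ℝ)..b, h t ^ α) ≤
      (α + 1) / (α + 2) * b :=
    div_le_of_le_mul₀
      (integral_nonneg hb.le fun t ht => Real.rpow_nonneg (hnn t ht) α) (by positivity)
      (hconc.integral_mul_rpow_le hb hnn hα.le)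
  rw [ge_iff_le, le_div_iff₀ hb]
  have : 1 / (α + 2) * b = b - (α + 1) / (α + 2) * b := by field_simp; ring
  linarith

theorem stmt_6 (b α : ℝ) (h : ℝ → ℝ) (hb : 0 < b) (hα : 0 < α)
    (hconc : ConcaveOn ℝ (Set.Icc 0 b) h)
    (hnn : ∀ t ∈ Set.Icc (0 : ℝ) b, 0 ≤ h t)
    (hint : 0 < ∫ t in (0 : ℝ)..b, h t) :
    (b - (∫ t in (0 : ℝ)..b, t * h t ^ α) / (∫ t in (0 : ℝ)..b, h t ^ α)) / b ≥
      1 / (α + 2) :=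
  stmt_6_general b α h hb hα hconc hnn
end

section
/- Let h:[a,b]→[0,∞) be a concave function with positive integral and let α>0. Let g_α(h) = (∫_a^b t h(t)^α dt)/(∫_a^b h(t)^α dt). Then h(g_α(h)) ≥ ((α+1)/(α+2)) · sup_{t∈[a,b]} h(t). -/
/-!
Let `g` be the barycenter of the weight `h ^ α`, so that `∫ (t - g) h(t)^α = 0`. Suppose some
`m > g` had `(α + 2) h(g) < (α + 1) h(m)`, and let `ℓ` be the secant line of `h` through `g` and
`m`. By concavity `h ≤ ℓ` left of `g` and `h ≥ ℓ` between `g` and `m`, so replacing `h` by `ℓ` on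
`[a, m]` and by `0` on `[m, b]` only decreases `∫ (t - g) h(t)^α`. Since `h ≥ 0`, `ℓ` vanishes at
some `z ≤ a`, and `∫_a^m (t - g) (t - z)^α > 0` because the barycenter of `(t - z)^α` on `[z, m]`
is `z + (α + 1)/(α + 2) (m - z) > g`. The case `m < g` follows by reflecting `[a, b]`.
-/

open Set MeasureTheory intervalIntegral

theorem ConcaveOn.sub_mul_add_sub_mul_le {s : Set ℝ} {f : ℝ → ℝ} (hf : ConcaveOn ℝ s f)
    {x y z : ℝ} (hx : x ∈ s) (hz : z ∈ s) (hxy : x ≤ y) (hyz : y ≤ z) :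
    (z - y) * f x + (y - x) * f z ≤ (z - x) * f y := by
  rcases (hxy.trans hyz).eq_or_lt with rfl | hxz
  · obtain rfl : y = x := le_antisymm hyz hxy
    simp
  have hzx : 0 < z - x := sub_pos.2 hxz
  have key := hf.2 hx hz (div_nonneg (sub_nonneg.2 hyz) hzx.le)
    (div_nonneg (sub_nonneg.2 hxy) hzx.le) (by rw [← add_div, div_eq_one_iff_eq hzx.ne']; ring)
  have hy : ((z - y) / (z - x)) • x + ((y - x) / (z - x)) • z = y := by
    simp only [smul_eq_mul]; field_simp; ring
  rw [hy, smul_eq_mul, smul_eq_mul, ← mul_le_mul_iff_of_pos_left hzx] at key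
  calc (z - y) * f x + (y - x) * f z
      = (z - x) * ((z - y) / (z - x) * f x + (y - x) / (z - x) * f z) := by field_simp
    _ ≤ (z - x) * f y := key

theorem ConcaveOn.le_secant_of_le {s : Set ℝ} {f : ℝ → ℝ} (hf : ConcaveOn ℝ s f)
    {x y k z t : ℝ} (hy : y ∈ s) (hxy : x < y)
    (hfx : f x = k * (x - z)) (hfy : f y = k * (y - z)) (ht : t ∈ s) (htx : t ≤ x) :
    f t ≤ k * (t - z) := by
  have := hf.sub_mul_add_sub_mul_le ht hy htx hxy.le
  rw [hfx, hfy] at this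
  refine le_of_mul_le_mul_left ?_ (sub_pos.2 hxy)
  linear_combination this

theorem ConcaveOn.secant_le_of_mem_Icc {s : Set ℝ} {f : ℝ → ℝ} (hf : ConcaveOn ℝ s f)
    {x y k z t : ℝ} (hx : x ∈ s) (hy : y ∈ s) (hxy : x < y)
    (hfx : f x = k * (x - z)) (hfy : f y = k * (y - z)) (ht : t ∈ Icc x y) :
    k * (t - z) ≤ f t := by
  have := hf.sub_mul_add_sub_mul_le hx hy ht.1 ht.2
  rw [hfx, hfy] at this
  refine le_of_mul_le_mul_left ?_ (sub_pos.2 hxy)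
  linear_combination this

theorem ConcaveOn.comp_add_sub {a b : ℝ} {f : ℝ → ℝ} (hf : ConcaveOn ℝ (Icc a b) f) :
    ConcaveOn ℝ (Icc a b) (fun t => f (a + b - t)) := by
  have := hf.comp_affineMap (AffineMap.const ℝ ℝ (a + b) - AffineMap.id ℝ ℝ)
  simp only [AffineMap.coe_sub, AffineMap.coe_const, AffineMap.coe_id] at this
  rwa [show (Function.const ℝ (a + b) - id) ⁻¹' Icc a b = (fun x => (a + b) - x) ⁻¹' Icc a b
    from rfl, preimage_const_sub_Icc, add_sub_cancel_right, add_sub_cancel_left] at this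

theorem ConcaveOn.le_two_mul_midpoint {a b : ℝ} {f : ℝ → ℝ} (hf : ConcaveOn ℝ (Icc a b) f)
    (hnn : ∀ t ∈ Icc a b, 0 ≤ f t) {t : ℝ} (ht : t ∈ Icc a b) :
    f t ≤ 2 * f ((a + b) / 2) := by
  have ht' : a + b - t ∈ Icc a b := ⟨by linarith [ht.2], by linarith [ht.1]⟩
  have key := hf.2 ht ht' (by norm_num : (0 : ℝ) ≤ 1 / 2) (by norm_num : (0 : ℝ) ≤ 1 / 2)
    (by norm_num)
  simp only [smul_eq_mul] at key
  rw [show 1 / 2 * t + 1 / 2 * (a + b - t) = (a + b) / 2 by ring] at key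
  linarith [hnn _ ht']

theorem ConcaveOn.intervalIntegrable_rpow_s7 {a b α : ℝ} {f : ℝ → ℝ} (hab : a ≤ b)
    (hf : ConcaveOn ℝ (Icc a b) f) (hnn : ∀ t ∈ Icc a b, 0 ≤ f t) (hα : 0 ≤ α) :
    IntervalIntegrable (fun t => f t ^ α) volume a b := by
  rw [intervalIntegrable_iff_integrableOn_Icc_of_le hab, integrableOn_Icc_iff_integrableOn_Ioo]
  have hcont : ContinuousOn f (Ioo a b) := by
    simpa only [interior_Icc] using hf.continuousOn_interior
  refine ⟨?_, .restrict_of_bounded (C := (2 * f ((a + b) / 2)) ^ α) measure_Ioo_lt_top ?_⟩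
  · exact (hcont.rpow_const fun _ _ => Or.inr hα).aestronglyMeasurable measurableSet_Ioo
  · rw [ae_restrict_iff' measurableSet_Ioo]
    refine .of_forall fun t ht => ?_
    have ht' := Ioo_subset_Icc_self ht
    rw [Real.norm_of_nonneg (Real.rpow_nonneg (hnn t ht') α)]
    exact Real.rpow_le_rpow (hnn t ht') (hf.le_two_mul_midpoint hnn ht') hα

theorem integral_rpow_pos_of_integral_pos {a b α : ℝ} {f : ℝ → ℝ} (hab : a ≤ b)
    (hnn : ∀ t ∈ Icc a b, 0 ≤ f t) (hα : α ≠ 0)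
    (hfα : IntervalIntegrable (fun t => f t ^ α) volume a b) (hpos : 0 < ∫ t in a..b, f t) :
    0 < ∫ t in a..b, f t ^ α := by
  have hnn' : 0 ≤ᵐ[volume.restrict (Ioc a b)] fun t => f t ^ α := by
    refine (ae_restrict_iff' measurableSet_Ioc).2 (.of_forall fun t ht => ?_)
    exact Real.rpow_nonneg (hnn t (Ioc_subset_Icc_self ht)) α
  refine (integral_nonneg hab fun t ht => Real.rpow_nonneg (hnn t ht) α).lt_of_ne
    fun hzero => hpos.ne' ?_
  have hae := (integral_eq_zero_iff_of_le_of_nonneg_ae hab hnn' hfα).1 hzero.symm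
  rw [Filter.EventuallyEq, ae_restrict_iff' measurableSet_Ioc] at hae
  calc (∫ t in a..b, f t) = ∫ t in a..b, (0 : ℝ) := by
        refine integral_congr_ae ?_
        rw [uIoc_of_le hab]
        filter_upwards [hae] with t ht hmem
        exact (Real.rpow_eq_zero (hnn t (Ioc_subset_Icc_self hmem)) hα).1 (ht hmem)
    _ = 0 := integral_zero

theorem integral_sub_mul_rpow {α : ℝ} (hα : -1 < α) (d : ℝ) {M : ℝ} (hM : 0 ≤ M) :
    ∫ u in 0..M, (u - d) * u ^ α = M ^ (α + 1) * (M / (α + 2) - d / (α + 1)) := by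
  have hα1 : α + 1 ≠ 0 := by linarith
  have hα2 : α + 1 + 1 ≠ 0 := by linarith
  have hsplit : EqOn (fun u => (u - d) * u ^ α) (fun u => u ^ (α + 1) - d * u ^ α) (uIcc 0 M) := by
    intro u hu
    rw [uIcc_of_le hM] at hu
    simp only [Real.rpow_add_one' hu.1 hα1]
    ring
  rw [integral_congr hsplit, integral_sub (intervalIntegrable_rpow' (by linarith))
    ((intervalIntegrable_rpow' (by linarith)).const_mul d), intervalIntegral.integral_const_mul,
    integral_rpow (Or.inl (by linarith)), integral_rpow (Or.inl (by linarith)),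
    Real.zero_rpow hα1, Real.zero_rpow hα2, Real.rpow_add_one' hM hα2]
  rw [show α + 1 + 1 = α + 2 by ring] at hα2 ⊢
  field_simp
  ring

theorem integral_sub_mul_rpow_sub_pos {α a g m z : ℝ} (hα : 0 ≤ α) (hza : z ≤ a) (hag : a ≤ g)
    (hlt : (α + 2) * (g - z) < (α + 1) * (m - z)) :
    0 < ∫ t in a..m, (t - g) * (t - z) ^ α := by
  have hmz : 0 < m - z := by nlinarith
  have hcont : Continuous fun t => (t - g) * (t - z) ^ α :=
    (continuous_id.sub continuous_const).mul
      ((continuous_id.sub continuous_const).rpow_const fun _ => Or.inr hα)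
  have hleft : ∫ t in z..a, (t - g) * (t - z) ^ α ≤ 0 := by
    refine (integral_mono_on hza (hcont.intervalIntegrable _ _) intervalIntegrable_const
      fun t ht => ?_).trans_eq integral_zero
    exact mul_nonpos_of_nonpos_of_nonneg (by linarith [ht.2])
      (Real.rpow_nonneg (by linarith [ht.1]) α)
  have hwhole : ∫ t in z..m, (t - g) * (t - z) ^ α
      = (m - z) ^ (α + 1) * ((m - z) / (α + 2) - (g - z) / (α + 1)) := by
    have := integral_comp_sub_right (fun u => (u - (g - z)) * u ^ α) z (a := z) (b := m)
    simp only [sub_sub_sub_cancel_right, sub_self] at this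
    rw [this, integral_sub_mul_rpow (by linarith) _ hmz.le]
  have hpos : 0 < (m - z) ^ (α + 1) * ((m - z) / (α + 2) - (g - z) / (α + 1)) := by
    refine mul_pos (Real.rpow_pos_of_pos hmz _) (sub_pos.2 ?_)
    rw [div_lt_div_iff₀ (by positivity) (by positivity)]
    linarith
  rw [← hwhole, ← integral_add_adjacent_intervals (hcont.intervalIntegrable z a)
    (hcont.intervalIntegrable a m)] at hpos
  linarith

noncomputable def intervalBarycenter (a b : ℝ) (w : ℝ → ℝ) : ℝ :=
  (∫ t in a..b, t * w t) / ∫ t in a..b, w t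

theorem integral_sub_intervalBarycenter_mul {a b : ℝ} {w : ℝ → ℝ}
    (hw : IntervalIntegrable w volume a b) (htw : IntervalIntegrable (fun t => t * w t) volume a b)
    (hw0 : ∫ t in a..b, w t ≠ 0) :
    ∫ t in a..b, (t - intervalBarycenter a b w) * w t = 0 := by
  simp only [sub_mul]
  rw [integral_sub htw (hw.const_mul _), intervalIntegral.integral_const_mul, intervalBarycenter,
    div_mul_cancel₀ _ hw0, sub_self]

theorem intervalBarycenter_mem_Icc {a b : ℝ} {w : ℝ → ℝ} (hab : a ≤ b)
    (hw : IntervalIntegrable w volume a b) (htw : IntervalIntegrable (fun t => t * w t) volume a b)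
    (hnn : ∀ t ∈ Icc a b, 0 ≤ w t) (hpos : 0 < ∫ t in a..b, w t) :
    intervalBarycenter a b w ∈ Icc a b := by
  rw [intervalBarycenter, mem_Icc, le_div_iff₀ hpos, div_le_iff₀ hpos,
    ← intervalIntegral.integral_const_mul, ← intervalIntegral.integral_const_mul]
  exact ⟨integral_mono_on hab (hw.const_mul a) htw fun t ht =>
      mul_le_mul_of_nonneg_right ht.1 (hnn t ht),
    integral_mono_on hab htw (hw.const_mul b) fun t ht =>
      mul_le_mul_of_nonneg_right ht.2 (hnn t ht)⟩

theorem ConcaveOn.exists_secant_eq_mul_sub {a b g m : ℝ} {f : ℝ → ℝ}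
    (hf : ConcaveOn ℝ (Icc a b) f) (hnn : ∀ t ∈ Icc a b, 0 ≤ f t)
    (hag : a ≤ g) (hgm : g < m) (hmb : m ≤ b) (hfgm : f g < f m) :
    ∃ k z, 0 < k ∧ z ≤ a ∧ f g = k * (g - z) ∧ f m = k * (m - z) := by
  have ha : a ∈ Icc a b := left_mem_Icc.2 (hag.trans (hgm.le.trans hmb))
  set k := (f m - f g) / (m - g)
  have hk : 0 < k := div_pos (sub_pos.2 hfgm) (sub_pos.2 hgm)
  have hkg : f g = k * (g - (g - f g / k)) := by field_simp; ring
  have hkm : f m = k * (m - (g - f g / k)) := by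
    rw [show m - (g - f g / k) = (m - g) + f g / k by ring, mul_add, mul_div_cancel₀ _ hk.ne',
      div_mul_cancel₀ _ (sub_pos.2 hgm).ne']
    ring
  refine ⟨k, g - f g / k, hk, ?_, hkg, hkm⟩
  have := (hnn a ha).trans (hf.le_secant_of_le ⟨hag.trans hgm.le, hmb⟩ hgm hkg hkm ha hag)
  linarith [(mul_nonneg_iff_of_pos_left hk).1 this]

theorem ConcaveOn.integral_sub_mul_rpow_pos {a b g m α : ℝ} {f : ℝ → ℝ}
    (hf : ConcaveOn ℝ (Icc a b) f) (hnn : ∀ t ∈ Icc a b, 0 ≤ f t) (hα : 0 ≤ α)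
    (hag : a ≤ g) (hgm : g < m) (hmb : m ≤ b) (hlt : (α + 2) * f g < (α + 1) * f m) :
    0 < ∫ t in a..b, (t - g) * f t ^ α := by
  have hab : a ≤ b := hag.trans (hgm.le.trans hmb)
  have hg : g ∈ Icc a b := ⟨hag, hgm.le.trans hmb⟩
  have hm : m ∈ Icc a b := ⟨hag.trans hgm.le, hmb⟩
  obtain ⟨k, z, hk, hza, hkg, hkm⟩ :=
    hf.exists_secant_eq_mul_sub hnn hag hgm hmb (by nlinarith [hnn g hg])
  have hlt' : (α + 2) * (g - z) < (α + 1) * (m - z) := by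
    rw [hkg, hkm] at hlt
    exact lt_of_mul_lt_mul_left (by linarith) hk.le
  have hcmp : ∀ t ∈ Icc a m, (t - g) * (k * (t - z)) ^ α ≤ (t - g) * f t ^ α := by
    intro t ht
    have htb : t ∈ Icc a b := ⟨ht.1, ht.2.trans hmb⟩
    rcases le_total t g with htg | hgt
    · exact mul_le_mul_of_nonpos_left (Real.rpow_le_rpow (hnn t htb)
        (hf.le_secant_of_le hm hgm hkg hkm htb htg) hα) (sub_nonpos.2 htg)
    · exact mul_le_mul_of_nonneg_left (Real.rpow_le_rpow (mul_nonneg hk.le (by linarith [ht.1]))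
        (hf.secant_le_of_mem_Icc hg hm hgm hkg hkm ⟨hgt, ht.2⟩) hα) (sub_nonneg.2 hgt)
  have hint : IntervalIntegrable (fun t => (t - g) * f t ^ α) volume a b :=
    (hf.intervalIntegrable_rpow_s7 hab hnn hα).continuousOn_mul
      (continuous_id.sub continuous_const).continuousOn
  have hint_am : IntervalIntegrable (fun t => (t - g) * f t ^ α) volume a m :=
    hint.mono_set (by rw [uIcc_of_le hm.1, uIcc_of_le hab]; exact Icc_subset_Icc le_rfl hmb)
  have hint_mb : IntervalIntegrable (fun t => (t - g) * f t ^ α) volume m b :=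
    hint.mono_set (by rw [uIcc_of_le hmb, uIcc_of_le hab]; exact Icc_subset_Icc hm.1 le_rfl)
  have hcont : Continuous fun t => (t - g) * (k * (t - z)) ^ α :=
    (continuous_id.sub continuous_const).mul
      ((continuous_const.mul (continuous_id.sub continuous_const)).rpow_const fun _ => Or.inr hα)
  calc 0 < k ^ α * ∫ t in a..m, (t - g) * (t - z) ^ α :=
        mul_pos (Real.rpow_pos_of_pos hk α) (integral_sub_mul_rpow_sub_pos hα hza hag hlt')
    _ = ∫ t in a..m, (t - g) * (k * (t - z)) ^ α := by
        rw [← intervalIntegral.integral_const_mul]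
        refine integral_congr fun t ht => ?_
        rw [uIcc_of_le hm.1] at ht
        simp only [Real.mul_rpow hk.le (by linarith [ht.1] : 0 ≤ t - z)]
        ring
    _ ≤ ∫ t in a..m, (t - g) * f t ^ α :=
        integral_mono_on hm.1 (hcont.intervalIntegrable _ _) hint_am hcmp
    _ ≤ (∫ t in a..m, (t - g) * f t ^ α) + ∫ t in m..b, (t - g) * f t ^ α :=
        le_add_of_nonneg_right (integral_nonneg hmb fun t ht =>
          mul_nonneg (by linarith [ht.1]) (Real.rpow_nonneg (hnn t ⟨hm.1.trans ht.1, ht.2⟩) α))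
    _ = ∫ t in a..b, (t - g) * f t ^ α := integral_add_adjacent_intervals hint_am hint_mb

theorem ConcaveOn.mul_le_of_integral_sub_mul_rpow_nonpos {a b g m α : ℝ} {f : ℝ → ℝ}
    (hf : ConcaveOn ℝ (Icc a b) f) (hnn : ∀ t ∈ Icc a b, 0 ≤ f t) (hα : 0 ≤ α)
    (hI : ∫ t in a..b, (t - g) * f t ^ α ≤ 0) (hag : a ≤ g) (hgm : g ≤ m) (hmb : m ≤ b) :
    (α + 1) * f m ≤ (α + 2) * f g := by
  rcases hgm.eq_or_lt with rfl | hgm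
  · nlinarith [hnn g ⟨hag, hmb⟩]
  · by_contra! hlt
    exact hI.not_gt (hf.integral_sub_mul_rpow_pos hnn hα hag hgm hmb hlt)

theorem ConcaveOn.mul_le_of_integral_sub_mul_rpow_nonneg {a b g m α : ℝ} {f : ℝ → ℝ}
    (hf : ConcaveOn ℝ (Icc a b) f) (hnn : ∀ t ∈ Icc a b, 0 ≤ f t) (hα : 0 ≤ α)
    (hI : 0 ≤ ∫ t in a..b, (t - g) * f t ^ α) (ham : a ≤ m) (hmg : m ≤ g) (hgb : g ≤ b) :
    (α + 1) * f m ≤ (α + 2) * f g := by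
  have hreflect : ∫ t in a..b, (t - (a + b - g)) * f (a + b - t) ^ α
      = -∫ t in a..b, (t - g) * f t ^ α := by
    have := integral_comp_sub_left (fun u => (g - u) * f u ^ α) (a + b) (a := a) (b := b)
    rw [add_sub_cancel_right, add_sub_cancel_left] at this
    rw [← intervalIntegral.integral_neg]
    convert this using 3 with t t <;> ring
  have := hf.comp_add_sub.mul_le_of_integral_sub_mul_rpow_nonpos
    (fun t ht => hnn _ ⟨by linarith [ht.2], by linarith [ht.1]⟩) hα
    (by rw [hreflect]; exact neg_nonpos.2 hI) (g := a + b - g) (m := a + b - m)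
    (by linarith) (by linarith) (by linarith)
  simpa only [sub_sub_cancel] using this

theorem stmt_7 (a b α : ℝ) (h : ℝ → ℝ) (hab : a < b) (hα : 0 < α)
    (hconc : ConcaveOn ℝ (Set.Icc a b) h)
    (hnn : ∀ t ∈ Set.Icc a b, 0 ≤ h t)
    (hint : 0 < ∫ t in a..b, h t) :
    h ((∫ t in a..b, t * h t ^ α) / (∫ t in a..b, h t ^ α)) ≥
      ((α + 1) / (α + 2)) * sSup (h '' Set.Icc a b) := by
  have hw := hconc.intervalIntegrable_rpow_s7 hab.le hnn hα.le
  have htw : IntervalIntegrable (fun t => t * h t ^ α) volume a b :=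
    hw.continuousOn_mul continuousOn_id
  have hI := integral_rpow_pos_of_integral_pos hab.le hnn hα.ne' hw hint
  set g := intervalBarycenter a b (fun t => h t ^ α)
  have hg : g ∈ Icc a b :=
    intervalBarycenter_mem_Icc hab.le hw htw (fun t ht => Real.rpow_nonneg (hnn t ht) α) hI
  have hcentered := integral_sub_intervalBarycenter_mul hw htw hI.ne'
  have hbound : ∀ m ∈ Icc a b, (α + 1) * h m ≤ (α + 2) * h g := fun m hm =>
    (le_total g m).elim
      (fun hgm => hconc.mul_le_of_integral_sub_mul_rpow_nonpos hnn hα.le hcentered.le hg.1 hgm hm.2)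
      (fun hmg => hconc.mul_le_of_integral_sub_mul_rpow_nonneg hnn hα.le hcentered.ge hm.1 hmg hg.2)
  have hsup : sSup (h '' Icc a b) ≤ (α + 2) / (α + 1) * h g := by
    refine Real.sSup_le (fun _ ⟨m, hm, hmx⟩ => ?_) (mul_nonneg (by positivity) (hnn g hg))
    rw [← hmx, div_mul_eq_mul_div, le_div_iff₀ (by positivity), mul_comm]
    exact hbound m hm
  calc (α + 1) / (α + 2) * sSup (h '' Icc a b)
      ≤ (α + 1) / (α + 2) * ((α + 2) / (α + 1) * h g) := by gcongr
    _ = h g := by field_simp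
end

section
/- Let g:[γ,δ]→[0,∞) be g(t)=c(δ-t) with c>0, and let β>0 and α>β. For any non-negative concave function φ:[γ,δ]→[0,∞), the ratio (∫_γ^δ t φ(t)^{α-β} g(t)^β dt)/(∫_γ^δ φ(t)^{α-β} g(t)^β dt) is at most (∫_γ^δ t (t-γ)^{α-β} g(t)^β dt)/(∫_γ^δ (t-γ)^{α-β} g(t)^β dt). -/
/-!
For a concave `φ ≥ 0` on `[γ, δ]` the ratio `φ t / (t - γ)` is non-increasing, so the weight
`φ ^ (α - β) * g ^ β` decreases relative to `(t - γ) ^ (α - β) * g ^ β`: it puts comparatively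
more mass to the left, and hence has the smaller barycentre. The comparison of barycentres is a
Chebyshev-type inequality: for weights `F`, `K` with `F / K` non-increasing the function
`(t - s) * (F s * K t - F t * K s)` is non-negative, and its double integral is twice the
difference of the two sides cross-multiplied.
-/

open MeasureTheory Set

theorem ConcaveOn.mul_sub_le_mul_sub {φ : ℝ → ℝ} {a b s t : ℝ} (hφ : ConcaveOn ℝ (Icc a b) φ)
    (ha : 0 ≤ φ a) (hs : a < s) (hst : s ≤ t) (ht : t ≤ b) :
    φ t * (s - a) ≤ φ s * (t - a) := by
  have hab : a ∈ Icc a b := left_mem_Icc.2 (hs.le.trans (hst.trans ht))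
  have hsecant := hφ.neg.secant_mono hab ⟨hs.le, hst.trans ht⟩ ⟨(hs.trans_le hst).le, ht⟩
    hs.ne' (hs.trans_le hst).ne' hst
  simp only [Pi.neg_apply] at hsecant
  rw [div_le_div_iff₀ (sub_pos.2 hs) (sub_pos.2 (hs.trans_le hst))] at hsecant
  nlinarith [mul_nonneg ha (sub_nonneg.2 hst)]

theorem ConcaveOn.rpow_mul_le_rpow_mul {φ w : ℝ → ℝ} {a b p s t : ℝ}
    (hφ : ConcaveOn ℝ (Icc a b) φ) (hφnn : ∀ u ∈ Icc a b, 0 ≤ φ u) (hw : ∀ u ∈ Icc a b, 0 ≤ w u)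
    (hp : 0 ≤ p) (hs : a < s) (hst : s ≤ t) (ht : t ≤ b) :
    φ t ^ p * w t * ((s - a) ^ p * w s) ≤ φ s ^ p * w s * ((t - a) ^ p * w t) := by
  have hsmem : s ∈ Icc a b := ⟨hs.le, hst.trans ht⟩
  have htmem : t ∈ Icc a b := ⟨hs.le.trans hst, ht⟩
  have hratio : (φ t * (s - a)) ^ p ≤ (φ s * (t - a)) ^ p :=
    Real.rpow_le_rpow (mul_nonneg (hφnn t htmem) (sub_nonneg.2 hs.le))
      (hφ.mul_sub_le_mul_sub (hφnn a (left_mem_Icc.2 (htmem.1.trans ht))) hs hst ht) hp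
  rw [Real.mul_rpow (hφnn t htmem) (sub_nonneg.2 hs.le),
    Real.mul_rpow (hφnn s hsmem) (sub_nonneg.2 htmem.1)] at hratio
  nlinarith [mul_le_mul_of_nonneg_right hratio (mul_nonneg (hw s hsmem) (hw t htmem))]

section Chebyshev

variable {ι : Type*} [MeasurableSpace ι] {μ : Measure ι} {g F K : ι → ℝ}

theorem integral_sub_mul_sub_mul_sub (hF : Integrable F μ) (hK : Integrable K μ)
    (hgF : Integrable (fun x => g x * F x) μ) (hgK : Integrable (fun x => g x * K x) μ) (s : ι) :
    ∫ t, (g t - g s) * (F s * K t - F t * K s) ∂μ =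
      F s * (∫ t, g t * K t ∂μ) - g s * F s * (∫ t, K t ∂μ) - K s * (∫ t, g t * F t ∂μ) +
        g s * K s * ∫ t, F t ∂μ := by
  have hexpand : (fun t => (g t - g s) * (F s * K t - F t * K s)) = fun t =>
      F s * (g t * K t) - g s * F s * K t - K s * (g t * F t) + g s * K s * F t := by
    funext t; ring
  rw [hexpand, integral_add, integral_sub, integral_sub, integral_const_mul, integral_const_mul,
    integral_const_mul, integral_const_mul]
  all_goals first
    | exact ((hgK.const_mul _).sub (hK.const_mul _)).sub (hgF.const_mul _)
    | exact (hgK.const_mul _).sub (hK.const_mul _)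
    | exact Integrable.const_mul ‹_› _

theorem integral_mul_integral_le_of_antitone_ratio [LinearOrder ι] {S : Set ι}
    (hS : ∀ᵐ x ∂μ, x ∈ S) (hg : MonotoneOn g S)
    (hFK : ∀ s ∈ S, ∀ t ∈ S, s ≤ t → F t * K s ≤ F s * K t)
    (hF : Integrable F μ) (hK : Integrable K μ)
    (hgF : Integrable (fun x => g x * F x) μ) (hgK : Integrable (fun x => g x * K x) μ) :
    (∫ x, g x * F x ∂μ) * ∫ x, K x ∂μ ≤ (∫ x, g x * K x ∂μ) * ∫ x, F x ∂μ := by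
  have hpair : ∀ s ∈ S, ∀ t ∈ S, 0 ≤ (g t - g s) * (F s * K t - F t * K s) := by
    intro s hs t ht
    rcases le_total s t with hst | hts
    · exact mul_nonneg (sub_nonneg.2 (hg hs ht hst)) (sub_nonneg.2 (hFK s hs t ht hst))
    · exact mul_nonneg_of_nonpos_of_nonpos (sub_nonpos.2 (hg ht hs hts))
        (sub_nonpos.2 (hFK t ht s hs hts))
  have hdouble : 0 ≤ ∫ s, ∫ t, (g t - g s) * (F s * K t - F t * K s) ∂μ ∂μ := by
    refine integral_nonneg_of_ae ?_
    filter_upwards [hS] with s hs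
    exact integral_nonneg_of_ae (by filter_upwards [hS] with t ht using hpair s hs t ht)
  simp only [integral_sub_mul_sub_mul_sub hF hK hgF hgK] at hdouble
  rw [integral_add, integral_sub, integral_sub, integral_mul_const, integral_mul_const,
    integral_mul_const, integral_mul_const] at hdouble
  · linarith
  all_goals first
    | exact ((hF.mul_const _).sub (hgF.mul_const _)).sub (hK.mul_const _)
    | exact (hF.mul_const _).sub (hgF.mul_const _)
    | exact Integrable.mul_const ‹_› _

end Chebyshev

theorem stmt_12 (γ δ c α β : ℝ) (φ : ℝ → ℝ) (hγδ : γ < δ) (hc : 0 < c)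
    (hβ : 0 < β) (hαβ : β < α)
    (hφconc : ConcaveOn ℝ (Set.Icc γ δ) φ)
    (hφnn : ∀ t ∈ Set.Icc γ δ, 0 ≤ φ t)
    (hφint : 0 < ∫ t in γ..δ, φ t ^ (α - β) * (c * (δ - t)) ^ β) :
    (∫ t in γ..δ, t * (φ t ^ (α - β) * (c * (δ - t)) ^ β)) /
        (∫ t in γ..δ, φ t ^ (α - β) * (c * (δ - t)) ^ β) ≤
      (∫ t in γ..δ, t * ((t - γ) ^ (α - β) * (c * (δ - t)) ^ β)) /
        (∫ t in γ..δ, (t - γ) ^ (α - β) * (c * (δ - t)) ^ β) := by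
  have hp : 0 ≤ α - β := (sub_pos.2 hαβ).le
  have hK : Continuous fun t => (t - γ) ^ (α - β) * (c * (δ - t)) ^ β :=
    ((Real.continuous_rpow_const hp).comp (by fun_prop)).mul
      ((Real.continuous_rpow_const hβ.le).comp (by fun_prop))
  have hKpos : 0 < ∫ t in γ..δ, (t - γ) ^ (α - β) * (c * (δ - t)) ^ β :=
    intervalIntegral.intervalIntegral_pos_of_pos_on (hK.intervalIntegrable γ δ)
      (fun t ht => mul_pos (Real.rpow_pos_of_pos (sub_pos.2 ht.1) _)
        (Real.rpow_pos_of_pos (mul_pos hc (sub_pos.2 ht.2)) _)) hγδ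
  -- A vanishing integral would be the junk value of a non-integrable function.
  have hF := (intervalIntegral.intervalIntegrable_of_integral_ne_zero hφint.ne').1
  rw [div_le_div_iff₀ hφint hKpos]
  simp only [intervalIntegral.integral_of_le hγδ.le]
  exact integral_mul_integral_le_of_antitone_ratio (ae_restrict_mem measurableSet_Ioc)
    monotoneOn_id
    (fun s hs t ht hst => hφconc.rpow_mul_le_rpow_mul hφnn
      (fun u hu => Real.rpow_nonneg (mul_nonneg hc.le (sub_nonneg.2 hu.2)) β) hp hs.1 hst ht.2)
    hF hK.integrableOn_Ioc
    (hF.continuousOn_mul_of_subset continuousOn_id isCompact_Icc measurableSet_Ioc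
      Ioc_subset_Icc_self)
    (continuous_id.mul hK).integrableOn_Ioc
end

section
/- Let K⊂ℝⁿ be a convex body with centroid at the origin and let u be a unit vector. Writing f(t)=vol_{n-1}(K∩(tu+u^⊥)) with support [a,b], one has b/(b-a) ≥ 1/(n+1). -/
/-!
Let `z ∈ K` minimise `ℓ = ⟪·, u⟫`, so `ℓ z = a`, and let `w = b - a`. The homothety with centre `z`
and ratio `1 - t / w` maps `K` into `{x ∈ K | t ≤ b - ℓ x}`, which therefore has volume at least
`(1 - t / w) ^ n · vol K`. Integrating in `t` (layer cake) gives
`∫_K (b - ℓ) ≥ w / (n + 1) · vol K`, while the centroid condition makes the left side `b · vol K`.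
-/

open MeasureTheory Set Module Filter Topology

theorem lintegral_Ioo_one_sub_div_pow {w : ℝ} (hw : 0 < w) (n : ℕ) :
    ∫⁻ t in Ioo 0 w, ENNReal.ofReal ((1 - t / w) ^ n) = ENNReal.ofReal (w / (n + 1)) := by
  have hcont : Continuous fun t : ℝ => (1 - t / w) ^ n := by fun_prop
  rw [← ofReal_integral_eq_lintegral_ofReal, ← integral_Ioc_eq_integral_Ioo,
    ← intervalIntegral.integral_of_le hw.le]
  · congr 1
    rw [intervalIntegral.integral_comp_div (fun t => (1 - t) ^ n) hw.ne',
      intervalIntegral.integral_comp_sub_left (fun t => t ^ n), integral_pow, zero_div,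
      div_self hw.ne', sub_zero, sub_self, one_pow, zero_pow n.succ_ne_zero, sub_zero,
      smul_eq_mul, mul_one_div]
  · exact (hcont.integrableOn_Icc (a := 0) (b := w)).mono_set Ioo_subset_Icc_self
  · refine (ae_restrict_iff' measurableSet_Ioo).2 (ae_of_all _ fun t ht => ?_)
    have : t / w < 1 := (div_lt_one hw).2 ht.2
    exact pow_nonneg (by linarith) n

variable {E : Type*} [NormedAddCommGroup E] [NormedSpace ℝ E]

theorem sInf_lt_sSup_image_of_interior_nonempty {K : Set E} (hKc : IsCompact K)
    (hKint : (interior K).Nonempty) {ℓ : E →L[ℝ] ℝ} (hℓ : ℓ ≠ 0) :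
    sInf (ℓ '' K) < sSup (ℓ '' K) := by
  obtain ⟨x, hx⟩ := hKint
  obtain ⟨v, hv⟩ : ∃ v, ℓ v ≠ 0 := by simpa [ContinuousLinearMap.ext_iff] using hℓ
  have hline : Tendsto (fun t : ℝ => x + t • v) (𝓝 0) (𝓝 x) := by
    simpa using (show Continuous fun t : ℝ => x + t • v by fun_prop).tendsto 0
  have hnear : ∀ᶠ t : ℝ in 𝓝[≠] 0, x + t • v ∈ K ∧ t ≠ 0 :=
    ((hline.eventually_mem (mem_interior_iff_mem_nhds.1 hx)).filter_mono
      nhdsWithin_le_nhds).and self_mem_nhdsWithin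
  obtain ⟨t, htK, ht⟩ := hnear.exists
  have hne : ℓ x ≠ ℓ (x + t • v) := by simpa [hv] using ht
  have himage : IsCompact (ℓ '' K) := hKc.image ℓ.continuous
  rcases hne.lt_or_gt with h | h
  · exact (csInf_le himage.bddBelow ⟨x, interior_subset hx, rfl⟩).trans_lt
      (h.trans_le (le_csSup himage.bddAbove ⟨_, htK, rfl⟩))
  · exact (csInf_le himage.bddBelow ⟨_, htK, rfl⟩).trans_lt
      (h.trans_le (le_csSup himage.bddAbove ⟨x, interior_subset hx, rfl⟩))

variable [MeasurableSpace E] [BorelSpace E] [FiniteDimensional ℝ E] {μ : Measure E}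
  [μ.IsAddHaarMeasure]

namespace Convex

variable {K : Set E}

theorem ofReal_pow_mul_le_measure_inter (hK : Convex ℝ K) (ℓ : E →L[ℝ] ℝ) {b : ℝ}
    (hb : ∀ x ∈ K, ℓ x ≤ b) {z : E} (hz : z ∈ K) {s : ℝ} (hs : s ∈ Icc (0 : ℝ) 1) :
    ENNReal.ofReal (s ^ finrank ℝ E) * μ K ≤ μ (K ∩ {x | (1 - s) * (b - ℓ z) ≤ b - ℓ x}) := by
  rw [← abs_of_nonneg (pow_nonneg hs.1 _), ← μ.addHaar_image_homothety z]
  refine measure_mono ?_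
  rintro - ⟨x, hx, rfl⟩
  refine ⟨AffineMap.homothety_eq_lineMap z s x ▸ hK.lineMap_mem hz hx hs, ?_⟩
  have hℓ : ℓ (AffineMap.homothety z s x) = s * (ℓ x - ℓ z) + ℓ z := by
    simp [AffineMap.homothety_apply]
  change (1 - s) * (b - ℓ z) ≤ b - ℓ (AffineMap.homothety z s x)
  rw [hℓ]
  nlinarith [hb x hx, hs.1]

theorem sub_div_mul_measureReal_le_integral (hK : Convex ℝ K) (hKc : IsCompact K)
    (ℓ : E →L[ℝ] ℝ) {b : ℝ} (hb : ∀ x ∈ K, ℓ x ≤ b) {z : E} (hz : z ∈ K) :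
    (b - ℓ z) / (finrank ℝ E + 1) * μ.real K ≤ ∫ x in K, (b - ℓ x) ∂μ := by
  set w := b - ℓ z
  have hnn : 0 ≤ᵐ[μ.restrict K] fun x => b - ℓ x :=
    (ae_restrict_iff' hKc.measurableSet).2 (ae_of_all _ fun x hx => sub_nonneg.2 (hb x hx))
  have hint : IntegrableOn (fun x => b - ℓ x) K μ :=
    (continuous_const.sub ℓ.continuous).continuousOn.integrableOn_compact hKc
  rcases (show 0 ≤ w from sub_nonneg.2 (hb z hz)).eq_or_lt with hw | hw
  · rw [← hw, zero_div, zero_mul]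
    exact integral_nonneg_of_ae hnn
  have key : ENNReal.ofReal (w / (finrank ℝ E + 1)) * μ K ≤
      ∫⁻ x in K, ENNReal.ofReal (b - ℓ x) ∂μ :=
    calc ENNReal.ofReal (w / (finrank ℝ E + 1)) * μ K
        = ∫⁻ t in Ioo 0 w, ENNReal.ofReal ((1 - t / w) ^ finrank ℝ E) * μ K := by
          rw [lintegral_mul_const _ (by fun_prop), lintegral_Ioo_one_sub_div_pow hw]
      _ ≤ ∫⁻ t in Ioo 0 w, μ.restrict K {x | t ≤ b - ℓ x} := by
          refine setLIntegral_mono' measurableSet_Ioo fun t ht => ?_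
          have htw : t / w ∈ Ioo (0 : ℝ) 1 := ⟨div_pos ht.1 hw, (div_lt_one hw).2 ht.2⟩
          have hlevel : (1 - (1 - t / w)) * w = t := by field_simp; ring
          have := hK.ofReal_pow_mul_le_measure_inter (μ := μ) ℓ hb hz
            (s := 1 - t / w) ⟨by linarith [htw.2], by linarith [htw.1]⟩
          rwa [hlevel, inter_comm, ← Measure.restrict_apply' hKc.measurableSet] at this
      _ ≤ ∫⁻ t in Ioi 0, μ.restrict K {x | t ≤ b - ℓ x} := lintegral_mono_set Ioo_subset_Ioi_self
      _ = ∫⁻ x in K, ENNReal.ofReal (b - ℓ x) ∂μ :=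
          (lintegral_eq_lintegral_meas_le _ hnn hint.aemeasurable).symm
  rwa [← ofReal_integral_eq_lintegral_ofReal hint hnn, ← ofReal_measureReal hKc.measure_lt_top.ne,
    ← ENNReal.ofReal_mul (by positivity), ENNReal.ofReal_le_ofReal_iff (integral_nonneg_of_ae hnn)]
    at key

theorem sub_sInf_div_le_sSup_image (hK : Convex ℝ K) (hKc : IsCompact K)
    (hKint : (interior K).Nonempty) (hcent : ∫ x in K, x ∂μ = 0) (ℓ : E →L[ℝ] ℝ) :
    (sSup (ℓ '' K) - sInf (ℓ '' K)) / (finrank ℝ E + 1) ≤ sSup (ℓ '' K) := by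
  have himage : IsCompact (ℓ '' K) := hKc.image ℓ.continuous
  obtain ⟨z, hz, hza⟩ := himage.sInf_mem ((hKint.mono interior_subset).image ℓ)
  have hb : ∀ x ∈ K, ℓ x ≤ sSup (ℓ '' K) := fun x hx => le_csSup himage.bddAbove ⟨x, hx, rfl⟩
  have hmean : ∫ x in K, (sSup (ℓ '' K) - ℓ x) ∂μ = sSup (ℓ '' K) * μ.real K := by
    have hint : IntegrableOn (fun x : E => x) K μ :=
      continuous_id.continuousOn.integrableOn_compact hKc
    rw [integral_sub (integrableOn_const (C := sSup (ℓ '' K)) hKc.measure_lt_top.ne)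
        (ℓ.integrable_comp hint),
      ℓ.integral_comp_comm hint, hcent, map_zero, sub_zero, setIntegral_const, smul_eq_mul,
      mul_comm]
  have hpos : 0 < μ.real K :=
    ENNReal.toReal_pos (μ.measure_pos_of_nonempty_interior hKint).ne' hKc.measure_lt_top.ne
  have := hK.sub_div_mul_measureReal_le_integral (μ := μ) hKc ℓ hb hz
  rw [hza, hmean] at this
  exact le_of_mul_le_mul_right this hpos

end Convex

theorem stmt_18 (n : ℕ) (K : Set (EuclideanSpace ℝ (Fin n)))
    (hKconv : Convex ℝ K) (hKcomp : IsCompact K) (hKint : (interior K).Nonempty)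
    (hcent : (∫ x in K, x) = 0)
    (u : EuclideanSpace ℝ (Fin n)) (hu : ‖u‖ = 1)
    (a b : ℝ)
    (ha : a = sInf ((fun x => (inner ℝ x u : ℝ)) '' K))
    (hb : b = sSup ((fun x => (inner ℝ x u : ℝ)) '' K)) :
    b / (b - a) ≥ 1 / (n + 1) := by
  have hℓ : (fun x => (inner ℝ x u : ℝ)) = innerSL ℝ u := funext fun x => real_inner_comm u x
  have hℓ0 : innerSL ℝ u ≠ 0 := fun h => by simpa [hu] using congr($h u)
  rw [hℓ] at ha hb
  have hwidth : a < b := ha ▸ hb ▸ sInf_lt_sSup_image_of_interior_nonempty hKcomp hKint hℓ0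
  have key := hKconv.sub_sInf_div_le_sSup_image hKcomp hKint hcent (innerSL ℝ u)
  rw [← ha, ← hb, finrank_euclideanSpace_fin, div_le_iff₀ (by positivity)] at key
  rw [ge_iff_le, div_le_div_iff₀ (by positivity) (sub_pos.2 hwidth)]
  linarith
end
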